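/- Fix real numbers x₁, x₂, x₃, pairwise distinct, and a function f : ℝ → ℝ. Suppose that for all probability vectors (p₁,p₂,p₃) and (p₁',p₂',p₃') (nonnegative, summing to 1), the implication ∑ᵢ pᵢ f(xᵢ) = ∑ᵢ pᵢ' f(xᵢ) ⟹ ∑ᵢ pᵢ xᵢ = ∑ᵢ pᵢ' xᵢ holds. Then there exist constants c₁ ≠ 0 and c₂ such that f(xᵢ) = c₁ xᵢ + c₂ for i = 1, 2, 3. -/

import Mathlib

/-!
Write `y i = f (x i)`. Every `d` with `∑ i, d i = 0` is a positive multiple of a difference of two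
probability vectors, so the hypothesis says that `d ⬝ᵥ y = 0` forces `d ⬝ᵥ x = 0`. For `d = y ⨯₃ 1`
this is the vanishing of `det ![x, y, 1]`: the points `(x i, y i)` are collinear. For
`d = e₀ - e₁` it shows `y 0 ≠ y 1`, so the line is not horizontal.
-/

open Matrix

def MeanDetermines {ι : Type*} [Fintype ι] (u v : ι → ℝ) : Prop :=
  ∀ p p' : ι → ℝ, (∀ i, 0 ≤ p i) → ∑ i, p i = 1 → (∀ i, 0 ≤ p' i) → ∑ i, p' i = 1 →
    p ⬝ᵥ u = p' ⬝ᵥ u → p ⬝ᵥ v = p' ⬝ᵥ v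

namespace MeanDetermines

variable {ι : Type*} [Fintype ι] {u v : ι → ℝ}

theorem dotProduct_eq_zero [Nonempty ι] (h : MeanDetermines u v) {d : ι → ℝ}
    (hd : ∑ i, d i = 0) (hdu : d ⬝ᵥ u = 0) : d ⬝ᵥ v = 0 := by
  set S := ∑ i, (|d i| + 1)
  set p : ℝ → ι → ℝ := fun s i => (|d i| + 1 + s * d i) / S
  have hS : 0 < S := Finset.sum_pos (fun i _ => by positivity) Finset.univ_nonempty
  have hp_nonneg (s : ℝ) (hs : |s| ≤ 1) (i : ι) : 0 ≤ p s i := by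
    have : |s * d i| ≤ |d i| := by
      rw [abs_mul]; exact mul_le_of_le_one_left (abs_nonneg _) hs
    exact div_nonneg (by linarith [neg_abs_le (s * d i)]) hS.le
  have hp_sum (s : ℝ) : ∑ i, p s i = 1 := by
    rw [← Finset.sum_div, Finset.sum_add_distrib, ← Finset.mul_sum, hd, mul_zero, add_zero,
      div_self hS.ne']
  have hp_sub (g : ι → ℝ) : p 1 ⬝ᵥ g - p (-1) ⬝ᵥ g = 2 / S * d ⬝ᵥ g := by
    simp only [p, dotProduct, ← Finset.sum_sub_distrib, Finset.mul_sum]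
    exact Finset.sum_congr rfl fun i _ => by ring
  have key := h (p 1) (p (-1)) (hp_nonneg 1 (by norm_num)) (hp_sum 1)
    (hp_nonneg (-1) (by norm_num)) (hp_sum (-1)) (sub_eq_zero.mp (by rw [hp_sub, hdu, mul_zero]))
  have := hp_sub v
  rw [key, sub_self, eq_comm, mul_eq_zero] at this
  exact this.resolve_left (by positivity)

theorem apply_eq_of_apply_eq (h : MeanDetermines u v) [DecidableEq ι] {i j : ι} (hij : u i = u j) :
    v i = v j := by
  have : Nonempty ι := ⟨i⟩
  have := h.dotProduct_eq_zero (d := Pi.single i 1 - Pi.single j 1) (by simp)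
    (by simp [sub_dotProduct, hij])
  simpa [sub_dotProduct, sub_eq_zero] using this

theorem dotProduct_cross_one_eq_zero {u v : Fin 3 → ℝ} (h : MeanDetermines u v) :
    v ⬝ᵥ u ⨯₃ 1 = 0 := by
  rw [dotProduct_comm]
  refine h.dotProduct_eq_zero ?_ ?_
  · rw [← one_dotProduct, dot_cross_self]
  · rw [dotProduct_comm, dot_self_cross]

end MeanDetermines

theorem exists_affine_of_dotProduct_cross_one_eq_zero {u v : Fin 3 → ℝ} (hv : v 0 ≠ v 1)
    (huv : v ⬝ᵥ u ⨯₃ 1 = 0) : ∃ c₁ c₂ : ℝ, ∀ i, u i = c₁ * v i + c₂ := by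
  have hv' : v 1 - v 0 ≠ 0 := sub_ne_zero.mpr hv.symm
  simp only [dotProduct, cross_apply, Fin.sum_univ_three, Pi.one_apply, mul_one, cons_val_zero,
    cons_val_one, cons_val] at huv
  refine ⟨(u 1 - u 0) / (v 1 - v 0), u 0 - (u 1 - u 0) / (v 1 - v 0) * v 0, fun i => ?_⟩
  fin_cases i <;> dsimp only [Fin.reduceFinMk]
  · ring
  · field_simp; ring
  · field_simp; linear_combination huv

/-- If comparing the mean of f under all three-point distributions on {x₁,x₂,x₃}
determines the mean of the identity, then f is affine (with nonzero slope) on the xᵢ. -/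
theorem stmt_18 (x : Fin 3 → ℝ) (hx : Function.Injective x) (f : ℝ → ℝ)
    (h : ∀ p p' : Fin 3 → ℝ, (∀ i, 0 ≤ p i) → (∑ i, p i) = 1 →
      (∀ i, 0 ≤ p' i) → (∑ i, p' i) = 1 →
      (∑ i, p i * f (x i)) = (∑ i, p' i * f (x i)) →
      (∑ i, p i * x i) = (∑ i, p' i * x i)) :
    ∃ c₁ c₂ : ℝ, c₁ ≠ 0 ∧ ∀ i, f (x i) = c₁ * x i + c₂ := by
  have hmean : MeanDetermines (fun i => f (x i)) x := h
  have hx01 : x 0 ≠ x 1 := hx.ne (by decide)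
  have hf01 : f (x 0) ≠ f (x 1) := mt hmean.apply_eq_of_apply_eq hx01
  obtain ⟨c₁, c₂, hc⟩ :=
    exists_affine_of_dotProduct_cross_one_eq_zero hx01 hmean.dotProduct_cross_one_eq_zero
  refine ⟨c₁, c₂, ?_, hc⟩
  rintro rfl
  exact hf01 (by simp [hc])
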